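/- arXiv:1710.10088 — 6 statements merged into one kernel-verified Lean document; each statement's English description precedes it below -/
import Mathlib

section
/- Let PS_k be a finite nonempty set of candidate breakpoints, and let bp_opt ∈ PS_k minimize j ↦ Δ(j+1, r_k+1, ε_{k+1}) over PS_k. Then for any breakpoint bp_{k+1} ≥ r_k + 2: if Δ(bp_opt+1, bp_{k+1}, ε_{k+1}) > 0, then for every j ∈ PS_k, Δ(j+1, bp_{k+1}, ε_{k+1}) > 0. -/
/-- Lemma 4.2: if the optimal breakpoint `bp_opt` fails
(`Δ(bp_opt+1, bp_{k+1}, ε) > 0`), then every other potential breakpoint fails too. -/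
theorem optimal_breakpoint_sound (c p : ℕ → ℝ) (ε : ℝ)
    (PS : Finset ℕ) (hPS : PS.Nonempty) (rk : ℕ)
    (hle : ∀ j ∈ PS, j ≤ rk)
    (bpopt : ℕ) (hopt : bpopt ∈ PS)
    (hmin : ∀ j ∈ PS,
      (∑ i ∈ Finset.Icc (bpopt + 1) (rk + 1), (|c i - p i| ^ 2 - ε ^ 2)) ≤
        ∑ i ∈ Finset.Icc (j + 1) (rk + 1), (|c i - p i| ^ 2 - ε ^ 2))
    (bp : ℕ) (hbp : rk + 2 ≤ bp)
    (hpos : 0 < ∑ i ∈ Finset.Icc (bpopt + 1) bp, (|c i - p i| ^ 2 - ε ^ 2)) :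
    ∀ j ∈ PS, 0 < ∑ i ∈ Finset.Icc (j + 1) bp, (|c i - p i| ^ 2 - ε ^ 2) := by
  intro j hj
  simp only [Finset.Icc_add_one_left_eq_Ioc] at *
  have hsplit : ∀ a : ℕ, a ≤ rk →
      ∑ i ∈ Finset.Ioc a bp, (|c i - p i| ^ 2 - ε ^ 2) =
      (∑ i ∈ Finset.Ioc a (rk + 1), (|c i - p i| ^ 2 - ε ^ 2)) +
      ∑ i ∈ Finset.Ioc (rk + 1) bp, (|c i - p i| ^ 2 - ε ^ 2) := by
    intro a ha
    rw [Finset.sum_Ioc_consecutive _ (by omega) (by omega)]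
  rw [hsplit j (hle j hj)]
  rw [hsplit bpopt (hle bpopt hopt)] at hpos
  have := hmin j hj
  linarith
end

section
/- Let P and W be n-length sequences and suppose the normalized Euclidean distance between their k-th segments (bp_{k-1}, bp_k] is at most ε_k, with l_{k-1} ≤ bp_{k-1} < bp_k ≤ r_k. Then for any subinterval [i', i] ⊆ (bp_{k-1}, bp_k] of length w = i − i' + 1, the means μ_P = (1/w)Σ_{j=i'}^{i} p_j and μ_W = (1/w)Σ_{j=i'}^{i} w_j satisfy |μ_P − μ_W| ≤ ε_k·sqrt(r_k − l_{k-1})/sqrt(w). -/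
/-- Single-segment envelope bound of the subsequence-based ELB: the means of any
`w`-length subinterval of a matching segment deviate by at most `md(k)/sqrt(w)`. -/
theorem subseq_mean_bound (n : ℕ) (p s : ℕ → ℝ) (ε : ℝ) (hε : 0 ≤ ε)
    (lkm1 rk bpkm1 bpk : ℕ)
    (h1 : lkm1 ≤ bpkm1) (h2 : bpkm1 < bpk) (h3 : bpk ≤ rk) (hn : rk ≤ n)
    (hdist : Real.sqrt ((1 / ((bpk : ℝ) - bpkm1)) *
        ∑ j ∈ Finset.Icc (bpkm1 + 1) bpk, |s j - p j| ^ 2) ≤ ε)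
    (i' i : ℕ) (hi' : bpkm1 < i') (hii : i' ≤ i) (hi : i ≤ bpk) :
    |(∑ j ∈ Finset.Icc i' i, p j) / ((i : ℝ) - i' + 1)
        - (∑ j ∈ Finset.Icc i' i, s j) / ((i : ℝ) - i' + 1)|
      ≤ ε * Real.sqrt ((rk : ℝ) - lkm1) / Real.sqrt ((i : ℝ) - i' + 1) := by
  set w : ℝ := (i : ℝ) - i' + 1 with hw_def
  have hii' : (i' : ℝ) ≤ i := by exact_mod_cast hii
  have hw : 0 < w := by simp only [hw_def]; linarith
  have hwsqrt : 0 < Real.sqrt w := Real.sqrt_pos.mpr hw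
  have hcard : ((Finset.Icc i' i).card : ℝ) = w := by
    rw [Nat.card_Icc]
    have : i + 1 - i' = i - i' + 1 := by omega
    rw [this]
    push_cast [Nat.cast_sub hii]
    ring
  have hseg : (0:ℝ) < (bpk : ℝ) - bpkm1 := by
    have : (bpkm1 : ℝ) < bpk := by exact_mod_cast h2
    linarith
  set B := ∑ j ∈ Finset.Icc (bpkm1 + 1) bpk, |s j - p j| ^ 2 with hB_def
  have hBnn : 0 ≤ B := Finset.sum_nonneg fun j _ => by positivity
  have harg : 0 ≤ (1 / ((bpk : ℝ) - bpkm1)) * B := by positivity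
  have hsq : (1 / ((bpk : ℝ) - bpkm1)) * B ≤ ε ^ 2 := by
    nlinarith [Real.sq_sqrt harg, Real.sqrt_nonneg ((1 / ((bpk : ℝ) - bpkm1)) * B)]
  have hB : B ≤ ε ^ 2 * ((bpk : ℝ) - bpkm1) := by
    rw [one_div] at hsq
    have h := mul_le_mul_of_nonneg_left hsq hseg.le
    rw [← mul_assoc, mul_inv_cancel₀ hseg.ne', one_mul] at h
    linarith
  set A := ∑ j ∈ Finset.Icc i' i, |s j - p j| ^ 2 with hA_def
  have hAB : A ≤ B := by
    apply Finset.sum_le_sum_of_subset_of_nonneg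
    · intro j hj
      simp only [Finset.mem_Icc] at *
      omega
    · intro j _ _; positivity
  have hrl : (bpk : ℝ) - bpkm1 ≤ (rk : ℝ) - lkm1 := by
    have h3' : (bpk : ℝ) ≤ rk := by exact_mod_cast h3
    have h1' : (lkm1 : ℝ) ≤ bpkm1 := by exact_mod_cast h1
    linarith
  have hA : A ≤ ε ^ 2 * ((rk : ℝ) - lkm1) := by nlinarith
  -- Cauchy-Schwarz (Chebyshev form): (∑ f)² ≤ card * ∑ f²
  have hCS : (∑ j ∈ Finset.Icc i' i, (p j - s j)) ^ 2 ≤ w * A := by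
    have h := sq_sum_le_card_mul_sum_sq (s := Finset.Icc i' i) (f := fun j => p j - s j)
    have heq : ∑ j ∈ Finset.Icc i' i, (p j - s j) ^ 2 = A := by
      rw [hA_def]
      apply Finset.sum_congr rfl
      intro j _
      rw [sq_abs]
      ring
    rw [heq] at h
    calc (∑ j ∈ Finset.Icc i' i, (p j - s j)) ^ 2
        ≤ ((Finset.Icc i' i).card : ℝ) * A := by exact_mod_cast h
      _ = w * A := by rw [hcard]
  set S := ∑ j ∈ Finset.Icc i' i, (p j - s j) with hS_def
  have hrlnn : (0:ℝ) ≤ (rk : ℝ) - lkm1 := le_trans (le_of_lt hseg) hrl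
  have hSbound : |S| ≤ ε * Real.sqrt ((rk : ℝ) - lkm1) * Real.sqrt w := by
    have hsq2 : S ^ 2 ≤ (ε * Real.sqrt ((rk : ℝ) - lkm1) * Real.sqrt w) ^ 2 := by
      have h1 : (ε * Real.sqrt ((rk : ℝ) - lkm1) * Real.sqrt w) ^ 2
          = ε ^ 2 * ((rk : ℝ) - lkm1) * w := by
        rw [mul_pow, mul_pow, Real.sq_sqrt hrlnn, Real.sq_sqrt hw.le]
      rw [h1]
      nlinarith
    calc |S| = Real.sqrt (S ^ 2) := (Real.sqrt_sq_eq_abs S).symm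
      _ ≤ Real.sqrt ((ε * Real.sqrt ((rk : ℝ) - lkm1) * Real.sqrt w) ^ 2) :=
          Real.sqrt_le_sqrt hsq2
      _ = ε * Real.sqrt ((rk : ℝ) - lkm1) * Real.sqrt w := by
          rw [Real.sqrt_sq (by positivity)]
  have hlhs : (∑ j ∈ Finset.Icc i' i, p j) / w - (∑ j ∈ Finset.Icc i' i, s j) / w
      = S / w := by
    rw [hS_def, Finset.sum_sub_distrib, sub_div]
  rw [hlhs, abs_div, abs_of_pos hw]
  rw [div_le_div_iff₀ hw hwsqrt]
  calc |S| * Real.sqrt w ≤ (ε * Real.sqrt ((rk : ℝ) - lkm1) * Real.sqrt w) * Real.sqrt w :=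
        mul_le_mul_of_nonneg_right hSbound hwsqrt.le
    _ = ε * Real.sqrt ((rk : ℝ) - lkm1) * w := by
        rw [mul_assoc, Real.mul_self_sqrt hw.le]
end

section
/- Let P and W be n-length sequences with a segmentation by breakpoints bp_0 < bp_1 < ... < bp_b, where each segment satisfies ED(W-segment k, P-segment k)² ≤ md(k)², with md(k) = ε_k·sqrt(r_k − l_{k-1}). If a w-length interval [i', i] overlaps segments k_l through k_r, then the means over that interval satisfy |μ_{P[i':i]} − μ_{W[i':i]}| ≤ sqrt((1/w)·Σ_{k=k_l}^{k_r} md(k)²). -/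
open Finset

theorem abs_sum_div_card_sub_sum_div_card_le {ι : Type*} (S : Finset ι) (f g : ι → ℝ) :
    |(∑ i ∈ S, f i) / #S - (∑ i ∈ S, g i) / #S| ≤ √((1 / #S) * ∑ i ∈ S, (f i - g i) ^ 2) := by
  rw [← sub_div, ← sum_sub_distrib]
  apply Real.le_sqrt_of_sq_le
  rcases S.eq_empty_or_nonempty with rfl | hS
  · simp
  have hcard : (0 : ℝ) < #S := by exact_mod_cast hS.card_pos
  rw [sq_abs, div_pow, div_le_iff₀ (by positivity)]
  calc (∑ i ∈ S, (f i - g i)) ^ 2 ≤ #S * ∑ i ∈ S, (f i - g i) ^ 2 := sq_sum_le_card_mul_sum_sq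
    _ = 1 / #S * (∑ i ∈ S, (f i - g i) ^ 2) * (#S : ℝ) ^ 2 := by field_simp

theorem sum_Icc_sum_Ioc_eq_sum_Ioc {M : Type*} [AddCommMonoid M] {bp : ℕ → ℕ} (hbp : Monotone bp)
    (g : ℕ → M) {kl kr : ℕ} (hklr : kl ≤ kr) :
    ∑ k ∈ Icc kl kr, ∑ j ∈ Ioc (bp (k - 1)) (bp k), g j = ∑ j ∈ Ioc (bp (kl - 1)) (bp kr), g j := by
  induction kr, hklr using Nat.le_induction with
  | base => simp
  | succ m hm ih =>
    rw [sum_Icc_succ_top (by omega), ih, Nat.add_sub_cancel,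
      sum_Ioc_consecutive g (hbp (by omega)) (hbp m.le_succ)]

theorem subseq_mean_bound_general_general (p s : ℕ → ℝ)
    (bp : ℕ → ℕ) (md : ℕ → ℝ)
    (hmono : ∀ k, bp k < bp (k + 1))
    (kl kr : ℕ) (hklr : kl ≤ kr)
    (hseg : ∀ k, kl ≤ k → k ≤ kr →
      (∑ j ∈ Finset.Icc (bp (k - 1) + 1) (bp k), |s j - p j| ^ 2) ≤ md k ^ 2)
    (i' i : ℕ) (hi' : bp (kl - 1) < i')
    (hii : i' ≤ i) (hi : i ≤ bp kr) :
    |(∑ j ∈ Finset.Icc i' i, p j) / ((i : ℝ) - i' + 1)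
        - (∑ j ∈ Finset.Icc i' i, s j) / ((i : ℝ) - i' + 1)|
      ≤ Real.sqrt ((1 / ((i : ℝ) - i' + 1)) * ∑ k ∈ Finset.Icc kl kr, md k ^ 2) := by
  have hcard : ((#(Icc i' i) : ℕ) : ℝ) = (i : ℝ) - i' + 1 := by
    rw [Nat.card_Icc, Nat.cast_sub (by omega)]
    push_cast
    ring
  have hsub : Icc i' i ⊆ Ioc (bp (kl - 1)) (bp kr) := fun j hj => by
    simp only [mem_Icc, mem_Ioc] at hj ⊢
    omega
  rw [← hcard]
  refine (abs_sum_div_card_sub_sum_div_card_le _ p s).trans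
    (Real.sqrt_le_sqrt (mul_le_mul_of_nonneg_left ?_ (by positivity)))
  calc ∑ j ∈ Icc i' i, (p j - s j) ^ 2
      ≤ ∑ j ∈ Ioc (bp (kl - 1)) (bp kr), (p j - s j) ^ 2 :=
        sum_le_sum_of_subset_of_nonneg hsub fun j _ _ => sq_nonneg _
    _ = ∑ k ∈ Icc kl kr, ∑ j ∈ Ioc (bp (k - 1)) (bp k), (p j - s j) ^ 2 :=
        (sum_Icc_sum_Ioc_eq_sum_Ioc (monotone_nat_of_le_succ fun k => (hmono k).le) _ hklr).symm
    _ ≤ ∑ k ∈ Icc kl kr, md k ^ 2 := sum_le_sum fun k hk => by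
        simp only [mem_Icc] at hk
        simpa only [Icc_add_one_left_eq_Ioc, sq_abs, abs_sub_comm (s _)] using hseg k hk.1 hk.2

/-- General envelope bound `θ_seq` of the subsequence-based ELB: if the `w`-length
interval `[i', i]` overlaps segments `k_l` through `k_r`, each of which matches within
`md(k)`, then the means over `[i', i]` deviate by at most
`sqrt((1/w)·Σ_{k=k_l}^{k_r} md(k)²)`. -/
theorem subseq_mean_bound_general (n b : ℕ) (p s : ℕ → ℝ)
    (bp : ℕ → ℕ) (md : ℕ → ℝ)
    (hmono : ∀ k, bp k < bp (k + 1)) (hend : bp b ≤ n)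
    (kl kr : ℕ) (hklr : kl ≤ kr) (hkl : 1 ≤ kl) (hkr : kr ≤ b)
    (hseg : ∀ k, kl ≤ k → k ≤ kr →
      (∑ j ∈ Finset.Icc (bp (k - 1) + 1) (bp k), |s j - p j| ^ 2) ≤ md k ^ 2)
    (i' i : ℕ) (hi' : bp (kl - 1) < i') (hi'l : i' ≤ bp kl)
    (hii : i' ≤ i) (hir : bp (kr - 1) < i) (hi : i ≤ bp kr) :
    |(∑ j ∈ Finset.Icc i' i, p j) / ((i : ℝ) - i' + 1)
        - (∑ j ∈ Finset.Icc i' i, s j) / ((i : ℝ) - i' + 1)|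
      ≤ Real.sqrt ((1 / ((i : ℝ) - i' + 1)) * ∑ k ∈ Finset.Icc kl kr, md k ^ 2) :=
  subseq_mean_bound_general_general p s bp md hmono kl kr hklr hseg i' i hi' hii hi
end

section
/- Element-based ELB satisfies the lower bounding property: let θ: [1..n] → ℝ≥0 be such that for every shift i ∈ [0, w) and every index m, if window W_{t+i} is a fine-grained match of pattern P then |s_{t, m+i} − p_m| ≤ θ(m). Define for each block j ∈ [1..N]: P̂_j^u = max_{0 ≤ a < w} (p_{jw−a} + θ(jw−a)), P̂_j^l = min_{0 ≤ a < w} (p_{jw−a} − θ(jw−a)), and the window block feature f_j = s_{t, jw} (the last element of the j-th window block). Then if some W_{t+i} with 0 ≤ i < w is a fine-grained match of P, it holds that P̂_j^l ≤ f_j ≤ P̂_j^u for all j ∈ [1..N]. -/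
/-- Element-based ELB satisfies the lower bounding property: if some window `W_{t+i}`
(`0 ≤ i < w`) is a fine-grained match of the pattern, then for every block `j ∈ [1, N]`
the feature (last element) of the `j`-th window block lies within the block bounds. -/
theorem elb_ele_lower_bounding (n w N : ℕ) (hw : 0 < w) (hN : N = n / w)
    (p s : ℕ → ℝ) (θ : ℕ → ℝ) (hθ : ∀ m, 0 ≤ θ m)
    (Match : ℕ → Prop)
    (henv : ∀ i, i < w → Match i → ∀ m, |s (m + i) - p m| ≤ θ m)
    (i : ℕ) (hi : i < w) (hmatch : Match i) :
    ∀ j, 1 ≤ j → j ≤ N →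
      (Finset.range w).inf' ⟨0, Finset.mem_range.mpr hw⟩
          (fun a => p (j * w - a) - θ (j * w - a)) ≤ s (j * w) ∧
      s (j * w) ≤ (Finset.range w).sup' ⟨0, Finset.mem_range.mpr hw⟩
          (fun a => p (j * w - a) + θ (j * w - a)) := by
  intro j hj1 hj2
  have hiw : i ≤ j * w := le_trans hi.le (Nat.le_mul_of_pos_left w hj1)
  have hm : j * w - i + i = j * w := Nat.sub_add_cancel hiw
  have h := henv i hi hmatch (j * w - i)
  rw [hm] at h
  have h1 := abs_le.mp h
  constructor
  · refine le_trans (Finset.inf'_le _ (Finset.mem_range.mpr hi)) ?_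
    linarith [h1.1]
  · refine le_trans ?_ (Finset.le_sup' _ (Finset.mem_range.mpr hi))
    linarith [h1.2]
end

section
/- Pattern transformation for MSM guarantees no false dismissals: let C and P be n-length sequences with a segmentation bp_0 < bp_1 < ... < bp_b where l_{k-1} ≤ bp_{k-1} and bp_k ≥ r_{k-1}+1, l_k ≤ bp_k ≤ r_k, and suppose the normalized Euclidean distance of each segment (bp_{k-1}, bp_k] is at most ε_k. Then for each k, the normalized Euclidean distance between C and P restricted to the fixed core interval (r_{k-1}, l_k] is at most ε_k·sqrt((r_k − l_{k-1})/(l_k − r_{k-1})). -/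
/-- Pattern transformation for MSM guarantees no false dismissals: if the `k`-th
segment `(bp_{k-1}, bp_k]` matches within `ε_k`, then the fixed core interval
`(r_{k-1}, l_k]` matches within `ε_k·sqrt((r_k − l_{k-1})/(l_k − r_{k-1}))`. -/
theorem pattern_transformation_sound (n : ℕ) (c p : ℕ → ℝ) (ε : ℝ) (hε : 0 ≤ ε)
    (lkm1 rkm1 lk rk bpkm1 bpk : ℕ)
    (h1 : lkm1 ≤ bpkm1) (h2 : bpkm1 ≤ rkm1) (h3 : rkm1 < lk) (h4 : lk ≤ bpk)
    (h5 : bpk ≤ rk) (hn : rk ≤ n)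
    (hdist : Real.sqrt ((1 / ((bpk : ℝ) - bpkm1)) *
        ∑ i ∈ Finset.Icc (bpkm1 + 1) bpk, |c i - p i| ^ 2) ≤ ε) :
    Real.sqrt ((1 / ((lk : ℝ) - rkm1)) *
        ∑ i ∈ Finset.Icc (rkm1 + 1) lk, |c i - p i| ^ 2)
      ≤ ε * Real.sqrt (((rk : ℝ) - lkm1) / ((lk : ℝ) - rkm1)) := by
  set Sfull := ∑ i ∈ Finset.Icc (bpkm1 + 1) bpk, |c i - p i| ^ 2 with hSfull
  set Score := ∑ i ∈ Finset.Icc (rkm1 + 1) lk, |c i - p i| ^ 2 with hScore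
  have hSfull0 : 0 ≤ Sfull := Finset.sum_nonneg fun i _ => by positivity
  have hScore0 : 0 ≤ Score := Finset.sum_nonneg fun i _ => by positivity
  have hbp : (bpkm1 : ℝ) < bpk := by exact_mod_cast show bpkm1 < bpk by omega
  have hlr : (rkm1 : ℝ) < lk := by exact_mod_cast h3
  have hsub : Score ≤ Sfull := by
    apply Finset.sum_le_sum_of_subset_of_nonneg
    · apply Finset.Icc_subset_Icc
      · omega
      · exact h4
    · intro i _ _; positivity
  -- from hdist : Sfull ≤ ε^2 * (bpk - bpkm1)
  have hx0 : 0 ≤ (1 / ((bpk : ℝ) - bpkm1)) * Sfull := by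
    have := sub_pos.mpr hbp
    positivity
  have hsq : (1 / ((bpk : ℝ) - bpkm1)) * Sfull ≤ ε ^ 2 := by
    have := Real.sq_sqrt hx0
    calc (1 / ((bpk : ℝ) - bpkm1)) * Sfull
        = Real.sqrt ((1 / ((bpk : ℝ) - bpkm1)) * Sfull) ^ 2 := (Real.sq_sqrt hx0).symm
      _ ≤ ε ^ 2 := by
          apply pow_le_pow_left₀ (Real.sqrt_nonneg _) hdist
  have hSle : Sfull ≤ ε ^ 2 * ((bpk : ℝ) - bpkm1) := by
    have hpos : (0:ℝ) < (bpk : ℝ) - bpkm1 := sub_pos.mpr hbp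
    have := mul_le_mul_of_nonneg_right hsq (le_of_lt hpos)
    calc Sfull = (1 / ((bpk : ℝ) - bpkm1)) * Sfull * ((bpk : ℝ) - bpkm1) := by
          field_simp
      _ ≤ ε ^ 2 * ((bpk : ℝ) - bpkm1) := this
  have hbound : (1 / ((lk : ℝ) - rkm1)) * Score ≤ ε ^ 2 * (((rk : ℝ) - lkm1) / ((lk : ℝ) - rkm1)) := by
    have hpos : (0:ℝ) < (lk : ℝ) - rkm1 := sub_pos.mpr hlr
    have h6 : ((bpk : ℝ) - bpkm1) ≤ (rk : ℝ) - lkm1 := by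
      have : (bpk:ℝ) ≤ rk := by exact_mod_cast h5
      have h1' : (lkm1:ℝ) ≤ bpkm1 := by exact_mod_cast h1
      linarith
    have : Score ≤ ε ^ 2 * ((rk : ℝ) - lkm1) :=
      le_trans hsub (le_trans hSle (by nlinarith))
    rw [one_div, inv_mul_eq_div, ← mul_div_assoc]
    gcongr
  calc Real.sqrt ((1 / ((lk : ℝ) - rkm1)) * Score)
      ≤ Real.sqrt (ε ^ 2 * (((rk : ℝ) - lkm1) / ((lk : ℝ) - rkm1))) :=
        Real.sqrt_le_sqrt hbound
    _ = ε * Real.sqrt (((rk : ℝ) - lkm1) / ((lk : ℝ) - rkm1)) := by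
        rw [Real.sqrt_mul (by positivity), Real.sqrt_sq hε]
end

section
/- Counterexample to Scheme 1 (no-false-dismissal failure): there exist a pattern P of length 9, a candidate C of length 9, thresholds ε_1 = 4, ε_2 = 5, and a break region BR_1 = [4,6], such that with breakpoint bp_1 = 6 both segments satisfy their normalized-Euclidean thresholds (so C is a fine-grained match of P), yet fixing bp'_1 = 4 (assigning the break region to the segment with larger threshold) yields ED_norm(P[5:9], C[5:9]) > 5, so C would be falsely discarded. -/
/-- Counterexample to Scheme 1: there exist a pattern `P` and candidate `C` of length 9
such that, with breakpoint `bp_1 = 6`, both segments match within their thresholds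
(`ε_1 = 4`, `ε_2 = 5`), yet fixing `bp'_1 = 4` makes the second segment `[5:9]` fail
its threshold 5, so `C` would be falsely discarded. -/
theorem scheme1_false_dismissal :
    ∃ P C : ℕ → ℝ,
      Real.sqrt ((1 / 6) * ∑ i ∈ Finset.Icc 1 6, |C i - P i| ^ 2) ≤ 4 ∧
      Real.sqrt ((1 / 3) * ∑ i ∈ Finset.Icc 7 9, |C i - P i| ^ 2) ≤ 5 ∧
      5 < Real.sqrt ((1 / 5) * ∑ i ∈ Finset.Icc 5 9, |C i - P i| ^ 2) := by
  refine ⟨fun _ => 0, fun i => if i ≤ 4 then 0 else if i ≤ 6 then 6 else 5, ?_, ?_, ?_⟩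
  · rw [show Finset.Icc 1 6 = ({1,2,3,4,5,6} : Finset ℕ) by decide]
    rw [Real.sqrt_le_iff]
    norm_num
  · rw [show Finset.Icc 7 9 = ({7,8,9} : Finset ℕ) by decide]
    rw [Real.sqrt_le_iff]
    norm_num
  · rw [show Finset.Icc 5 9 = ({5,6,7,8,9} : Finset ℕ) by decide]
    rw [Real.lt_sqrt (by norm_num)]
    norm_num
end
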